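/- The one-parameter family of Bol algebra structures 𝔅₀₆^α (α ∈ ℂ) on ℂ⁴, where 𝔅₀₆^α is given by [e₁,e₂]=e₃, [e₁,e₃]=e₄, [e₂,e₃]=e₄, [e₁,e₂,e₃]=e₄, [e₂,e₃,e₁]=(α−1)e₄, [e₁,e₃,e₂]=α e₄, degenerates (as a parametric family) to the structure 𝔅₀₂ given by [e₁,e₂]=e₃, [e₁,e₃]=e₄, [e₁,e₂,e₃]=e₄, [e₂,e₃,e₁]=−(1/2)e₄, [e₁,e₃,e₂]=(1/2)e₄, [e₂,e₃,e₂]=e₄. -/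
import Mathlib


open Filter Matrix Topology

/-- ℂ⁴ -/
abbrev V4 : Type := Fin 4 → ℂ

/-- GL₄(ℂ) -/
abbrev GL4 := Matrix.GeneralLinearGroup (Fin 4) ℂ

/-- structure constants of a bilinear map on ℂ⁴: `μ i j` is the value on `(eᵢ, eⱼ)`. -/
abbrev Bil4 := Fin 4 → Fin 4 → V4

/-- structure constants of a trilinear map on ℂ⁴. -/
abbrev Tril4 := Fin 4 → Fin 4 → Fin 4 → V4

/-- standard basis vectors -/
noncomputable def e4 (k : Fin 4) : V4 := Pi.single k (1 : ℂ)

/-- action of `g ∈ GL₄(ℂ)` on a bilinear map: `(g·μ)(x,y) = g μ(g⁻¹x, g⁻¹y)`,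
in structure constants. -/
noncomputable def actBil (g : GL4) (μ : Bil4) : Bil4 := fun i j =>
  (g : Matrix (Fin 4) (Fin 4) ℂ).mulVec
    (∑ p, ∑ q,
      (((g⁻¹ : GL4) : Matrix (Fin 4) (Fin 4) ℂ) p i *
       ((g⁻¹ : GL4) : Matrix (Fin 4) (Fin 4) ℂ) q j) • μ p q)

/-- action of `g ∈ GL₄(ℂ)` on a trilinear map:
`(g·τ)(x,y,z) = g τ(g⁻¹x, g⁻¹y, g⁻¹z)`, in structure constants. -/
noncomputable def actTril (g : GL4) (τ : Tril4) : Tril4 := fun i j k =>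
  (g : Matrix (Fin 4) (Fin 4) ℂ).mulVec
    (∑ p, ∑ q, ∑ r,
      (((g⁻¹ : GL4) : Matrix (Fin 4) (Fin 4) ℂ) p i *
       ((g⁻¹ : GL4) : Matrix (Fin 4) (Fin 4) ℂ) q j *
       ((g⁻¹ : GL4) : Matrix (Fin 4) (Fin 4) ℂ) r k) • τ p q r)

/-- the parametric family `(μ_α, τ_α)` degenerates to `(lam,sig)`: there are maps
`f : ℂ∖{0} → ℂ` and `g : ℂ∖{0} → GL₄(ℂ)` with `g(t)·μ_{f(t)} → lam`
and `g(t)·τ_{f(t)} → sig` as `t → 0`. -/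
def DegeneratesFam (μ : ℂ → Bil4) (τ : ℂ → Tril4) (lam : Bil4) (sig : Tril4) : Prop :=
  ∃ f : ℂ → ℂ, ∃ g : ℂ → GL4,
    Tendsto (fun t => actBil (g t) (μ (f t))) (𝓝[≠] (0 : ℂ)) (𝓝 lam) ∧
    Tendsto (fun t => actTril (g t) (τ (f t))) (𝓝[≠] (0 : ℂ)) (𝓝 sig)

noncomputable def μB06 : Bil4 := fun i j =>
  if i = (0 : Fin 4) ∧ j = (1 : Fin 4) then e4 2
  else if i = (1 : Fin 4) ∧ j = (0 : Fin 4) then -(e4 2)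
  else if i = (0 : Fin 4) ∧ j = (2 : Fin 4) then e4 3
  else if i = (2 : Fin 4) ∧ j = (0 : Fin 4) then -(e4 3)
  else if i = (1 : Fin 4) ∧ j = (2 : Fin 4) then e4 3
  else if i = (2 : Fin 4) ∧ j = (1 : Fin 4) then -(e4 3)
  else 0

noncomputable def τB06 (α : ℂ) : Tril4 := fun i j k =>
  if i = (0 : Fin 4) ∧ j = (1 : Fin 4) ∧ k = (2 : Fin 4) then e4 3
  else if i = (1 : Fin 4) ∧ j = (0 : Fin 4) ∧ k = (2 : Fin 4) then -(e4 3)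
  else if i = (1 : Fin 4) ∧ j = (2 : Fin 4) ∧ k = (0 : Fin 4) then (α - 1) • e4 3
  else if i = (2 : Fin 4) ∧ j = (1 : Fin 4) ∧ k = (0 : Fin 4) then -((α - 1) • e4 3)
  else if i = (0 : Fin 4) ∧ j = (2 : Fin 4) ∧ k = (1 : Fin 4) then α • e4 3
  else if i = (2 : Fin 4) ∧ j = (0 : Fin 4) ∧ k = (1 : Fin 4) then -(α • e4 3)
  else 0

noncomputable def μB02 : Bil4 := fun i j =>
  if i = (0 : Fin 4) ∧ j = (1 : Fin 4) then e4 2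
  else if i = (1 : Fin 4) ∧ j = (0 : Fin 4) then -(e4 2)
  else if i = (0 : Fin 4) ∧ j = (2 : Fin 4) then e4 3
  else if i = (2 : Fin 4) ∧ j = (0 : Fin 4) then -(e4 3)
  else 0

noncomputable def τB02 : Tril4 := fun i j k =>
  if i = (0 : Fin 4) ∧ j = (1 : Fin 4) ∧ k = (2 : Fin 4) then e4 3
  else if i = (1 : Fin 4) ∧ j = (0 : Fin 4) ∧ k = (2 : Fin 4) then -(e4 3)
  else if i = (1 : Fin 4) ∧ j = (2 : Fin 4) ∧ k = (0 : Fin 4) then (-(1/2) : ℂ) • e4 3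
  else if i = (2 : Fin 4) ∧ j = (1 : Fin 4) ∧ k = (0 : Fin 4) then -((-(1/2) : ℂ) • e4 3)
  else if i = (0 : Fin 4) ∧ j = (2 : Fin 4) ∧ k = (1 : Fin 4) then ((1/2) : ℂ) • e4 3
  else if i = (2 : Fin 4) ∧ j = (0 : Fin 4) ∧ k = (1 : Fin 4) then -(((1/2) : ℂ) • e4 3)
  else if i = (1 : Fin 4) ∧ j = (2 : Fin 4) ∧ k = (1 : Fin 4) then e4 3
  else if i = (2 : Fin 4) ∧ j = (1 : Fin 4) ∧ k = (1 : Fin 4) then -(e4 3)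
  else 0

/- ===== auxiliary material ===== -/

noncomputable def Amat (t : ℂ) : Matrix (Fin 4) (Fin 4) ℂ :=
  Matrix.of fun p i =>
    if p = 0 ∧ i = 0 then 1/(2*t)
    else if p = 0 ∧ i = 1 then 1/(2*t)
    else if p = 1 ∧ i = 0 then -(1/2)
    else if p = 1 ∧ i = 1 then 1/2
    else if p = 2 ∧ i = 2 then 1/(2*t)
    else if p = 3 ∧ i = 3 then 1/(4*t^2)
    else 0

noncomputable def Bmat (t : ℂ) : Matrix (Fin 4) (Fin 4) ℂ :=
  Matrix.of fun p i =>
    if p = 0 ∧ i = 0 then t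
    else if p = 0 ∧ i = 1 then -1
    else if p = 1 ∧ i = 0 then t
    else if p = 1 ∧ i = 1 then 1
    else if p = 2 ∧ i = 2 then 2*t
    else if p = 3 ∧ i = 3 then 4*t^2
    else 0

lemma AmatB (t : ℂ) (ht : t ≠ 0) : Amat t * Bmat t = 1 := by
  ext i j
  fin_cases i <;> fin_cases j <;>
    (simp [Amat, Bmat, Matrix.mul_apply, Fin.sum_univ_four, Matrix.one_apply] <;>
     field_simp <;> ring)

lemma BmatA (t : ℂ) (ht : t ≠ 0) : Bmat t * Amat t = 1 := by
  ext i j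
  fin_cases i <;> fin_cases j <;>
    (simp [Amat, Bmat, Matrix.mul_apply, Fin.sum_univ_four, Matrix.one_apply] <;>
     field_simp <;> ring)

noncomputable def gdeg (t : ℂ) : GL4 :=
  if ht : t = 0 then 1 else ⟨Amat t, Bmat t, AmatB t ht, BmatA t ht⟩

lemma gdeg_coe (t : ℂ) (ht : t ≠ 0) :
    ((gdeg t : GL4) : Matrix (Fin 4) (Fin 4) ℂ) = Amat t := by
  rw [gdeg, dif_neg ht]

lemma gdeg_inv_coe (t : ℂ) (ht : t ≠ 0) :
    (((gdeg t)⁻¹ : GL4) : Matrix (Fin 4) (Fin 4) ℂ) = Bmat t := by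
  rw [gdeg, dif_neg ht]; rfl

lemma tau_sum (α : ℂ) (c : Fin 4 → Fin 4 → Fin 4 → ℂ) :
    (∑ p, ∑ q, ∑ r, (c p q r) • τB06 α p q r)
      = ((c 0 1 2 - c 1 0 2) + (c 1 2 0 - c 2 1 0) * (α-1) + (c 0 2 1 - c 2 0 1) * α) • e4 3 := by
  simp (config := { decide := true }) only [Fin.sum_univ_four, τB06, if_true, if_false,
    and_true, and_false, true_and, false_and, and_self, ite_true, ite_false]
  simp only [smul_zero, add_zero, zero_add, smul_neg, smul_smul]
  match_scalars <;> ring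

lemma mu_sum (c : Fin 4 → Fin 4 → ℂ) :
    (∑ p, ∑ q, (c p q) • μB06 p q)
      = (c 0 1 - c 1 0) • e4 2 + ((c 0 2 - c 2 0) + (c 1 2 - c 2 1)) • e4 3 := by
  simp (config := { decide := true }) only [Fin.sum_univ_four, μB06, if_true, if_false,
    and_true, and_false, true_and, false_and, and_self, ite_true, ite_false]
  simp only [smul_zero, add_zero, zero_add, smul_neg, smul_smul]
  match_scalars <;> ring

lemma Ae2 (t : ℂ) : (Amat t).mulVec (e4 2) = (1/(2*t)) • e4 2 := by
  funext m
  fin_cases m <;>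
    simp (config := { decide := true }) [Amat, Matrix.mulVec, dotProduct,
      Fin.sum_univ_four, e4, Pi.single, Function.update]

lemma Ae3 (t : ℂ) : (Amat t).mulVec (e4 3) = (1/(4*t^2)) • e4 3 := by
  funext m
  fin_cases m <;>
    simp (config := { decide := true }) [Amat, Matrix.mulVec, dotProduct,
      Fin.sum_univ_four, e4, Pi.single, Function.update]

/-- the error tensor -/
noncomputable def ETen : Tril4 := fun i j k =>
  if i = (0 : Fin 4) ∧ j = (2 : Fin 4) ∧ k = (0 : Fin 4) then -(e4 3)
  else if i = (2 : Fin 4) ∧ j = (0 : Fin 4) ∧ k = (0 : Fin 4) then e4 3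
  else 0

set_option maxHeartbeats 2000000 in
lemma bilEq (t : ℂ) (ht : t ≠ 0) : actBil (gdeg t) μB06 = μB02 := by
  funext i j
  simp only [actBil, gdeg_coe t ht, gdeg_inv_coe t ht]
  rw [mu_sum]
  fin_cases i <;> fin_cases j <;>
    · simp (config := { decide := true }) only [Bmat, Matrix.of_apply, μB02,
        if_true, if_false, and_true, and_false, true_and, false_and, and_self,
        ite_true, ite_false]
      rw [Matrix.mulVec_add, Matrix.mulVec_smul, Matrix.mulVec_smul, Ae2, Ae3]
      match_scalars <;> field_simp <;> ring

set_option maxHeartbeats 4000000 in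
lemma trilEq (t : ℂ) (ht : t ≠ 0) :
    actTril (gdeg t) (τB06 (1/2 - t)) = fun i j k => τB02 i j k + t^2 • ETen i j k := by
  funext i j k
  simp only [actTril, gdeg_coe t ht, gdeg_inv_coe t ht]
  rw [tau_sum]
  fin_cases i <;> fin_cases j <;> fin_cases k <;>
    · simp (config := { decide := true }) only [Bmat, Matrix.of_apply, τB02, ETen,
        if_true, if_false, and_true, and_false, true_and, false_and, and_self,
        ite_true, ite_false, smul_zero, add_zero, smul_neg]
      rw [Matrix.mulVec_smul, Ae3]
      match_scalars <;> field_simp <;> ring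

/-- the family 𝔅₀₆^α degenerates to 𝔅₀₂. -/
theorem stmt13 : DegeneratesFam (fun _ => μB06) τB06 μB02 τB02 := by
  refine ⟨fun t => 1/2 - t, gdeg, ?_, ?_⟩
  · apply Tendsto.congr' (f₁ := fun _ => μB02)
    · filter_upwards [self_mem_nhdsWithin] with t ht
      exact (bilEq t ht).symm
    · exact tendsto_const_nhds
  · apply Tendsto.congr' (f₁ := fun t => fun i j k => τB02 i j k + t^2 • ETen i j k)
    · filter_upwards [self_mem_nhdsWithin] with t ht
      exact (trilEq t ht).symm
    · have h : Tendsto (fun t : ℂ => τB02 + t^2 • ETen) (𝓝 0) (𝓝 (τB02 + (0:ℂ)^2 • ETen)) :=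
        tendsto_const_nhds.add (((continuous_pow 2).tendsto 0).smul_const ETen)
      rw [show τB02 + (0:ℂ)^2 • ETen = τB02 by norm_num] at h
      have h2 : Tendsto (fun t : ℂ => τB02 + t^2 • ETen) (𝓝[≠] 0) (𝓝 τB02) :=
        h.mono_left nhdsWithin_le_nhds
      exact h2.congr (by intro t; rfl)
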